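/- arXiv:2205.05337 — 7 statements merged into one kernel-verified Lean document; each statement's English description precedes it below -/
import Mathlib

section
/- Let n, m, N be positive integers, let c : ℝ^n → ℝ^m be a function, and let S be an N×m real matrix all of whose entries lie in {−1, 1} and whose rows are pairwise distinct. Define g : ℝ^n → ℝ^N by g(x) = −S c(x), and for each i ∈ {1,…,N} define R'_i = {x ∈ ℝ^n : S_{i,k} c_k(x) > 0 for every k ∈ {1,…,m}}. Then for every i, every x ∈ R'_i, and every j ≠ i, one has g_i(x) < g_j(x). -/
/-- Stewart's indicator functions `g i x = -∑ k, S i k * c k x` attain a strict minimum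
at the index `i` of the region `R'_i = {x | ∀ k, S i k * c k x > 0}`. -/
theorem stmt0 (n m N : ℕ) (hn : 0 < n) (hm : 0 < m) (hN : 0 < N)
    (c : (Fin n → ℝ) → (Fin m → ℝ))
    (S : Matrix (Fin N) (Fin m) ℝ)
    (hS : ∀ i k, S i k = 1 ∨ S i k = -1)
    (hrows : ∀ i j : Fin N, i ≠ j → ∃ k, S i k ≠ S j k)
    (g : (Fin n → ℝ) → Fin N → ℝ)
    (hg : ∀ x i, g x i = -∑ k, S i k * c x k) :
    ∀ (i : Fin N) (x : Fin n → ℝ),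
      (∀ k, 0 < S i k * c x k) →
      ∀ j : Fin N, j ≠ i → g x i < g x j := by
  intro i x hx j hj
  rw [hg, hg, neg_lt_neg_iff]
  apply Finset.sum_lt_sum
  · intro k _
    rcases hS i k with h1 | h1 <;> rcases hS j k with h2 | h2 <;>
      simp only [h1, h2] <;> nlinarith [hx k]
  · obtain ⟨k, hk⟩ := hrows j i hj
    refine ⟨k, Finset.mem_univ k, ?_⟩
    have hxk := hx k
    rcases hS i k with h1 | h1 <;> rcases hS j k with h2 | h2 <;>
      rw [h1, h2] at hk ⊢ <;> rw [h1] at hxk <;>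
        first | (exact absurd rfl hk) | nlinarith
end

section
/- Let n, m be positive integers, let c : ℝ^n → ℝ^m be a function, and let S be the 2^m × m real matrix whose rows enumerate, without repetition, all sign vectors in {−1, 1}^m. Define g : ℝ^n → ℝ^{2^m} by g(x) = −S c(x), and for each i define R'_i = {x ∈ ℝ^n : S_{i,k} c_k(x) > 0 for every k} and R_i = {x ∈ ℝ^n : g_i(x) < g_j(x) for all j ≠ i}. Then R_i = R'_i for every i ∈ {1,…,2^m}. -/
/-- If the rows of `S` enumerate, without repetition, all sign vectors in `{-1,1}^m`,
then the regions defined via Stewart's indicator functions `g i x = -∑ k, S i k * c k x`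
by the strict-minimum condition coincide with the regions defined directly through the
signs of the switching functions `c`. -/
theorem stmt1 (n m : ℕ) (hn : 0 < n) (hm : 0 < m)
    (c : (Fin n → ℝ) → (Fin m → ℝ))
    (S : Matrix (Fin (2 ^ m)) (Fin m) ℝ)
    (hS : ∀ i k, S i k = 1 ∨ S i k = -1)
    (hrows : ∀ i j : Fin (2 ^ m), i ≠ j → ∃ k, S i k ≠ S j k)
    (hall : ∀ s : Fin m → ℝ, (∀ k, s k = 1 ∨ s k = -1) → ∃ i, ∀ k, S i k = s k)
    (g : (Fin n → ℝ) → Fin (2 ^ m) → ℝ)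
    (hg : ∀ x i, g x i = -∑ k, S i k * c x k) :
    ∀ i : Fin (2 ^ m),
      {x : Fin n → ℝ | ∀ j, j ≠ i → g x i < g x j} =
      {x : Fin n → ℝ | ∀ k, 0 < S i k * c x k} := by
  intro i
  ext x
  simp only [Set.mem_setOf_eq]
  constructor
  · intro h k0
    by_contra hk
    push_neg at hk
    set s : Fin m → ℝ := fun k => if k = k0 then -S i k else S i k with hs
    have hsval : ∀ k, s k = 1 ∨ s k = -1 := by
      intro k
      simp only [hs]
      split_ifs with hkk
      · rcases hS i k with h1 | h1 <;> simp [h1]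
      · exact hS i k
    obtain ⟨j, hj⟩ := hall s hsval
    have hji : j ≠ i := by
      intro he; subst he
      have := hj k0
      simp [hs] at this
      rcases hS j k0 with h1 | h1 <;> rw [h1] at this <;> linarith
    have hlt := h j hji
    rw [hg, hg] at hlt
    have hsum : ∑ k, S j k * c x k = (∑ k, S i k * c x k) - 2 * (S i k0 * c x k0) := by
      have key : ∀ k, S j k * c x k
          = S i k * c x k - (if k = k0 then 2 * (S i k0 * c x k0) else 0) := by
        intro k
        rw [hj k]
        by_cases hkk : k = k0 <;> simp [hs, hkk] <;> ring
      rw [Finset.sum_congr rfl (fun k _ => key k), Finset.sum_sub_distrib]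
      simp
    rw [hsum] at hlt
    linarith
  · intro h j hji
    rw [hg, hg]
    have hlt : ∑ k, S j k * c x k < ∑ k, S i k * c x k := by
      obtain ⟨k0, hk0⟩ := hrows j i hji
      apply Finset.sum_lt_sum
      · intro k _
        rcases hS j k with h1 | h1 <;> rcases hS i k with h2 | h2 <;>
          rw [h1, h2] <;> nlinarith [h k]
      · refine ⟨k0, Finset.mem_univ _, ?_⟩
        rcases hS j k0 with h1 | h1 <;> rcases hS i k0 with h2 | h2 <;>
          first
            | (exfalso; rw [h1, h2] at hk0; exact absurd rfl hk0)
            | (rw [h1, h2]; nlinarith [h k0])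
    linarith
end

section
/- Let k ≥ 1, M ∈ ℝ^{k×k}, α ∈ ℝ, and set M_α = M + α e e^T, where e ∈ ℝ^k is the all-ones vector. Suppose θ̃ ∈ ℝ^k satisfies θ̃ ≥ 0, w̃ := M_α θ̃ − e ≥ 0, and θ̃^T w̃ = 0. Then s := e^T θ̃ > 0, and the vectors θ := θ̃ / s and w := w̃ / s together with the scalar μ̇ := 1/s − α satisfy the mixed linear complementarity system: w = M θ − μ̇ e, e^T θ = 1, θ ≥ 0, w ≥ 0, and θ^T w = 0. -/
/-- Reconstruction of a solution of the mixed LCP governing active-set changes from a solution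
of the shifted standard LCP `0 ≤ M_α θ̃ - e ⊥ θ̃ ≥ 0` with `M_α = M + α e e^T`: the sum
`s = e^T θ̃` is positive, and `θ = θ̃/s`, `w = w̃/s`, `μ̇ = 1/s - α` solve
`w = Mθ - μ̇ e`, `e^T θ = 1`, `0 ≤ w ⊥ θ ≥ 0`. -/
theorem stmt9 (k : ℕ) (hk : 0 < k) (M : Matrix (Fin k) (Fin k) ℝ) (α : ℝ)
    (θt wt : Fin k → ℝ)
    (hθ : ∀ i, 0 ≤ θt i)
    (hwdef : wt = (M + α • Matrix.of fun _ _ : Fin k => (1 : ℝ)).mulVec θt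
      - (fun _ : Fin k => (1 : ℝ)))
    (hw : ∀ i, 0 ≤ wt i)
    (hcomp : ∑ i, θt i * wt i = 0) :
    0 < ∑ i, θt i ∧
    (∀ i, wt i / (∑ i', θt i') =
      M.mulVec (fun j => θt j / (∑ i', θt i')) i - ((∑ i', θt i')⁻¹ - α)) ∧
    (∑ i, θt i / (∑ i', θt i') = 1) ∧
    (∀ i, 0 ≤ θt i / (∑ i', θt i')) ∧
    (∀ i, 0 ≤ wt i / (∑ i', θt i')) ∧
    (∑ i, (θt i / (∑ i', θt i')) * (wt i / (∑ i', θt i')) = 0) := by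
  set s := ∑ i', θt i' with hs
  have hwt : ∀ i, wt i = M.mulVec θt i + α * s - 1 := by
    intro i
    rw [hwdef]
    simp [Matrix.add_mulVec, Matrix.mulVec, dotProduct, Finset.mul_sum, hs]
  have hspos : 0 < s := by
    rcases (Finset.sum_nonneg fun i _ => hθ i).lt_or_eq with h | h
    · exact h
    · exfalso
      have hall : ∀ i, θt i = 0 := by
        intro i
        have := (Finset.sum_eq_zero_iff_of_nonneg fun i _ => hθ i).1 h.symm i
          (Finset.mem_univ i)
        exact this
      obtain ⟨i⟩ : Nonempty (Fin k) := ⟨⟨0, hk⟩⟩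
      have hwi := hw i
      rw [hwt i] at hwi
      have hMv : M.mulVec θt i = 0 := by
        simp [Matrix.mulVec, dotProduct, hall]
      have hs0 : s = 0 := hs.trans h.symm
      rw [hMv, hs0] at hwi
      linarith
  have hsne : s ≠ 0 := ne_of_gt hspos
  refine ⟨hspos, ?_, ?_, ?_, ?_, ?_⟩
  · intro i
    have hMv : M.mulVec (fun j => θt j / s) i = M.mulVec θt i / s := by
      simp [Matrix.mulVec, dotProduct, Finset.sum_div, div_eq_mul_inv, mul_assoc, Finset.sum_mul]
    rw [hMv, hwt i]
    field_simp
    ring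
  · rw [← Finset.sum_div, ← hs, div_self hsne]
  · intro i; exact div_nonneg (hθ i) hspos.le
  · intro i; exact div_nonneg (hw i) hspos.le
  · have : ∑ i, θt i / s * (wt i / s) = (∑ i, θt i * wt i) / (s * s) := by
      rw [Finset.sum_div]
      exact Finset.sum_congr rfl fun i _ => by ring
    rw [this, hcomp, zero_div]
end

section
/- Let d ≥ 1, let x̂ : ℝ × ℝ^d → ℝ^d and ψ : ℝ^d → ℝ be continuously differentiable, let x_0 ∈ ℝ^d, let U be an open neighborhood of x_0, and let t_s : U → ℝ be differentiable with ψ(x̂(t_s(z), z)) = 0 for all z ∈ U. Write t* = t_s(x_0), v = ∂_t x̂(t*, x_0) ∈ ℝ^d, X = ∂_{x_0} x̂(t*, x_0) ∈ ℝ^{d×d}, and n = ∇ψ(x̂(t*, x_0)) ∈ ℝ^d, and assume n^T v ≠ 0. Define y_0 : U → ℝ^d by y_0(z) = x̂(t_s(z), z). Then y_0 is differentiable at x_0 with Jacobian ∂ y_0(x_0) = ( I − v n^T / (n^T v) ) X. -/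
/-!
Along the switching manifold `ψ (y₀ z) = 0`, so the chain rule gives `n (y₀' u) = 0`, while
differentiating `y₀ z = x̂ (t_s z, z)` gives `y₀' u = t_s' u • v + X u`. Solving the first
equation for the unknown `t_s' u` (possible since `n v ≠ 0`) yields
`y₀' u = X u - (n (X u) / n v) • v`, the projection of `X u` onto `ker n` along `v`.
-/

open Filter Topology

theorem eq_sub_div_smul_of_map_eq_zero {𝕜 F M : Type*} [Field 𝕜] [AddCommGroup F] [Module 𝕜 F]
    [FunLike M F 𝕜] [LinearMapClass M 𝕜 F 𝕜] (n : M) {v x : F} (a : 𝕜) (hv : n v ≠ 0)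
    (h : n (a • v + x) = 0) : a • v + x = x - (n x / n v) • v := by
  have ha : a = -(n x / n v) := by
    rw [map_add, map_smul, smul_eq_mul] at h
    field_simp
    linear_combination h
  rw [ha]
  module

section PartialDerivatives

variable {𝕜 E F : Type*} [NontriviallyNormedField 𝕜] [NormedAddCommGroup E] [NormedSpace 𝕜 E]
  [NormedAddCommGroup F] [NormedSpace 𝕜 F] {f : 𝕜 × E → F} {D : 𝕜 × E →L[𝕜] F}

theorem HasFDerivAt.hasDerivAt_comp_prodMk_left {t : 𝕜} {z : E} (hf : HasFDerivAt f D (t, z)) :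
    HasDerivAt (fun s => f (s, z)) (D (1, 0)) t :=
  (hf.comp (f := fun s => (s, z)) t (hasFDerivAt_prodMk_left t z)).hasDerivAt

theorem HasFDerivAt.comp_prodMk_right {t : 𝕜} {z : E} (hf : HasFDerivAt f D (t, z)) :
    HasFDerivAt (fun w => f (t, w)) (D.comp (.inr 𝕜 𝕜 E)) z :=
  hf.comp z (hasFDerivAt_prodMk_right t z)

theorem HasFDerivAt.comp_graph {g : E → 𝕜} {g' : E →L[𝕜] 𝕜} {z : E}
    (hf : HasFDerivAt f D (g z, z)) (hg : HasFDerivAt g g' z) :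
    HasFDerivAt (fun w => f (g w, w)) (D.comp (g'.prod (.id 𝕜 E))) z :=
  hf.comp (f := fun w => (g w, w)) z (hg.prodMk (hasFDerivAt_id z))

theorem ContinuousLinearMap.map_prod_eq_smul_add (a : 𝕜) (u : E) :
    D (a, u) = a • D (1, 0) + D (0, u) := by
  rw [← map_smul, ← map_add]
  simp

end PartialDerivatives

theorem HasFDerivAt.comp_eq_zero_of_eventually_const {𝕜 E F G : Type*} [NontriviallyNormedField 𝕜]
    [NormedAddCommGroup E] [NormedSpace 𝕜 E] [NormedAddCommGroup F] [NormedSpace 𝕜 F]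
    [NormedAddCommGroup G] [NormedSpace 𝕜 G] {φ : F → G} {φ' : F →L[𝕜] G} {y : E → F}
    {y' : E →L[𝕜] F} {z : E} {c : G} (hφ : HasFDerivAt φ φ' (y z)) (hy : HasFDerivAt y y' z)
    (hconst : ∀ᶠ w in 𝓝 z, φ (y w) = c) : φ'.comp y' = 0 :=
  (hφ.comp z hy).unique ((hasFDerivAt_const c z).congr_of_eventuallyEq hconst)

theorem stmt13_general (d : ℕ)
    (xh : ℝ × (Fin d → ℝ) → (Fin d → ℝ)) (ψ : (Fin d → ℝ) → ℝ)
    (hxh : ContDiff ℝ 1 xh) (hψ : ContDiff ℝ 1 ψ)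
    (x0 : Fin d → ℝ) (U : Set (Fin d → ℝ)) (hU : IsOpen U) (hx0 : x0 ∈ U)
    (ts : (Fin d → ℝ) → ℝ) (hts : DifferentiableOn ℝ ts U)
    (hswitch : ∀ z ∈ U, ψ (xh (ts z, z)) = 0)
    (htrans : fderiv ℝ ψ (xh (ts x0, x0)) (deriv (fun t => xh (t, x0)) (ts x0)) ≠ 0) :
    DifferentiableAt ℝ (fun z => xh (ts z, z)) x0 ∧
    ∀ u : Fin d → ℝ,
      fderiv ℝ (fun z => xh (ts z, z)) x0 u =
        fderiv ℝ (fun z => xh (ts x0, z)) x0 u -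
          (fderiv ℝ ψ (xh (ts x0, x0)) (fderiv ℝ (fun z => xh (ts x0, z)) x0 u) /
            fderiv ℝ ψ (xh (ts x0, x0)) (deriv (fun t => xh (t, x0)) (ts x0))) •
            deriv (fun t => xh (t, x0)) (ts x0) := by
  have hD := (hxh.differentiable one_ne_zero (ts x0, x0)).hasFDerivAt
  have hT := ((hts x0 hx0).differentiableAt (hU.mem_nhds hx0)).hasFDerivAt
  have hy := hD.comp_graph hT
  have hn := (hψ.differentiable one_ne_zero (xh (ts x0, x0))).hasFDerivAt
  have hker := hn.comp_eq_zero_of_eventually_const (y := fun z => xh (ts z, z)) hy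
    (eventually_of_mem (hU.mem_nhds hx0) hswitch)
  have hv := hD.hasDerivAt_comp_prodMk_left.deriv
  have hX := hD.comp_prodMk_right.fderiv
  refine ⟨hy.differentiableAt, fun u => ?_⟩
  rw [hv] at htrans ⊢
  rw [hy.fderiv, hX]
  have hu := congrArg (· u) hker
  simp only [ContinuousLinearMap.comp_apply, ContinuousLinearMap.prod_apply,
    ContinuousLinearMap.id_apply, zero_apply] at hu ⊢
  rw [ContinuousLinearMap.map_prod_eq_smul_add] at hu ⊢
  exact eq_sub_div_smul_of_map_eq_zero _ _ htrans hu

/-- Jacobian of the state at the switching time: with `y₀(z) = x̂(t_s(z), z)`,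
`v = ∂_t x̂(t*, x₀)`, `X = ∂_{x₀} x̂(t*, x₀)` and `n = ∇ψ(x̂(t*, x₀))`, and assuming
`n^T v ≠ 0` and `ψ(x̂(t_s(z), z)) = 0` on a neighborhood of `x₀`, the map `y₀` is
differentiable at `x₀` with Jacobian `(I - v n^T/(n^T v)) X`. -/
theorem stmt13 (d : ℕ) (hd : 0 < d)
    (xh : ℝ × (Fin d → ℝ) → (Fin d → ℝ)) (ψ : (Fin d → ℝ) → ℝ)
    (hxh : ContDiff ℝ 1 xh) (hψ : ContDiff ℝ 1 ψ)
    (x0 : Fin d → ℝ) (U : Set (Fin d → ℝ)) (hU : IsOpen U) (hx0 : x0 ∈ U)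
    (ts : (Fin d → ℝ) → ℝ) (hts : DifferentiableOn ℝ ts U)
    (hswitch : ∀ z ∈ U, ψ (xh (ts z, z)) = 0)
    (htrans : fderiv ℝ ψ (xh (ts x0, x0)) (deriv (fun t => xh (t, x0)) (ts x0)) ≠ 0) :
    DifferentiableAt ℝ (fun z => xh (ts z, z)) x0 ∧
    ∀ u : Fin d → ℝ,
      fderiv ℝ (fun z => xh (ts z, z)) x0 u =
        fderiv ℝ (fun z => xh (ts x0, z)) x0 u -
          (fderiv ℝ ψ (xh (ts x0, x0)) (fderiv ℝ (fun z => xh (ts x0, z)) x0 u) /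
            fderiv ℝ ψ (xh (ts x0, x0)) (deriv (fun t => xh (t, x0)) (ts x0))) •
            deriv (fun t => xh (t, x0)) (ts x0) :=
  stmt13_general d xh ψ hxh hψ x0 U hU hx0 ts hts hswitch htrans
end

section
/- Let k ≥ 1 and let M ∈ ℝ^{k×k} have all entries strictly positive, q ∈ ℝ^k. Define SOL(M, q) = {θ ∈ ℝ^k : θ ≥ 0, Mθ + q ≥ 0, θ^T (Mθ + q) = 0}. Call a solution θ* ∈ SOL(M, q) strongly stable if there exist ε > 0 and δ > 0 such that for every M' ∈ ℝ^{k×k} and q' ∈ ℝ^k with ‖M' − M‖ < δ and ‖q' − q‖ < δ, the set SOL(M', q') ∩ {θ : ‖θ − θ*‖ < ε} contains exactly one point. Suppose every element of SOL(M, q) is strongly stable. Then for any sequences M_n → M and q_n → q, the Hausdorff distance between SOL(M_n, q_n) and SOL(M, q) converges to 0 as n → ∞. -/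
set_option maxHeartbeats 1000000
open Filter Metric Finset

namespace Stmt14

variable {k : ℕ}

def solS (M : Fin k → Fin k → ℝ) (q : Fin k → ℝ) : Set (Fin k → ℝ) :=
  {θ : Fin k → ℝ | (∀ i, 0 ≤ θ i) ∧ (∀ i, 0 ≤ (∑ j, M i j * θ j) + q i) ∧
    ∑ i, θ i * ((∑ j, M i j * θ j) + q i) = 0}

lemma terms_zero {M : Fin k → Fin k → ℝ} {q θ : Fin k → ℝ} (h : θ ∈ solS M q) (i : Fin k) :
    θ i * ((∑ j, M i j * θ j) + q i) = 0 := by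
  have := (Finset.sum_eq_zero_iff_of_nonneg
    (fun i _ => mul_nonneg (h.1 i) (h.2.1 i))).mp h.2.2
  exact this i (Finset.mem_univ i)

lemma entry_abs_le (A : Fin k → Fin k → ℝ) (i j : Fin k) : |A i j| ≤ ‖A‖ := by
  calc |A i j| = ‖A i j‖ := (Real.norm_eq_abs _).symm
    _ ≤ ‖A i‖ := norm_le_pi_norm (A i) j
    _ ≤ ‖A‖ := norm_le_pi_norm A i

lemma coord_abs_le (v : Fin k → ℝ) (i : Fin k) : |v i| ≤ ‖v‖ := by
  calc |v i| = ‖v i‖ := (Real.norm_eq_abs _).symm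
    _ ≤ ‖v‖ := norm_le_pi_norm v i

lemma norm_bound {M : Fin k → Fin k → ℝ} {q θ : Fin k → ℝ} {m : ℝ} (hm : 0 < m)
    (hM : ∀ i j, m ≤ M i j) (h : θ ∈ solS M q) : ‖θ‖ ≤ ‖q‖ / m := by
  set T := ∑ i, θ i with hT
  have hT0 : 0 ≤ T := Finset.sum_nonneg fun i _ => h.1 i
  have hθT : ∀ i, θ i ≤ T := fun i =>
    Finset.single_le_sum (fun j _ => h.1 j) (Finset.mem_univ i)
  have key : m * T ^ 2 - T * ‖q‖ ≤ 0 := by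
    have h1 : ∀ i ∈ Finset.univ, θ i * (m * T + q i) ≤ θ i * ((∑ j, M i j * θ j) + q i) := by
      intro i _
      apply mul_le_mul_of_nonneg_left _ (h.1 i)
      have : m * T ≤ ∑ j, M i j * θ j := by
        rw [hT, Finset.mul_sum]
        exact Finset.sum_le_sum fun j _ => mul_le_mul_of_nonneg_right (hM i j) (h.1 j)
      linarith
    have h2 : ∑ i, θ i * (m * T + q i) ≤ 0 := h.2.2 ▸ Finset.sum_le_sum h1
    have h3 : ∀ i ∈ Finset.univ, θ i * (m * T - ‖q‖) ≤ θ i * (m * T + q i) := by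
      intro i _
      apply mul_le_mul_of_nonneg_left _ (h.1 i)
      have := coord_abs_le q i
      have := abs_le.mp this
      linarith
    have h4 : ∑ i, θ i * (m * T - ‖q‖) ≤ 0 := le_trans (Finset.sum_le_sum h3) h2
    have h5 : T * (m * T - ‖q‖) ≤ 0 := by
      rw [← Finset.sum_mul] at h4; exact h4
    nlinarith
  have hTb : T ≤ ‖q‖ / m := by
    rcases eq_or_lt_of_le hT0 with h0 | h0
    · rw [← h0]; positivity
    · rw [le_div_iff₀ hm]; nlinarith
  refine le_trans ((pi_norm_le_iff_of_nonneg hT0).mpr fun i => ?_) hTb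
  rw [Real.norm_eq_abs, abs_of_nonneg (h.1 i)]
  exact hθT i

lemma mem_of_tendsto {A : ℕ → Fin k → Fin k → ℝ} {b Y : ℕ → Fin k → ℝ}
    {M : Fin k → Fin k → ℝ} {q y : Fin k → ℝ}
    (hA : Tendsto A atTop (nhds M)) (hb : Tendsto b atTop (nhds q))
    (hY : Tendsto Y atTop (nhds y)) (hmem : ∀ n, Y n ∈ solS (A n) (b n)) :
    y ∈ solS M q := by
  have hYi : ∀ i, Tendsto (fun n => Y n i) atTop (nhds (y i)) := tendsto_pi_nhds.mp hY
  have hbi : ∀ i, Tendsto (fun n => b n i) atTop (nhds (q i)) := tendsto_pi_nhds.mp hb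
  have hAij : ∀ i j, Tendsto (fun n => A n i j) atTop (nhds (M i j)) := fun i j =>
    tendsto_pi_nhds.mp (tendsto_pi_nhds.mp hA i) j
  have hfi : ∀ i, Tendsto (fun n => (∑ j, A n i j * Y n j) + b n i) atTop
      (nhds ((∑ j, M i j * y j) + q i)) := fun i =>
    Tendsto.add (tendsto_finset_sum _ fun j _ => (hAij i j).mul (hYi j)) (hbi i)
  refine ⟨fun i => ge_of_tendsto (hYi i) (Eventually.of_forall fun n => (hmem n).1 i),
    fun i => ge_of_tendsto (hfi i) (Eventually.of_forall fun n => (hmem n).2.1 i), ?_⟩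
  have hsum : Tendsto (fun n => ∑ i, Y n i * ((∑ j, A n i j * Y n j) + b n i)) atTop
      (nhds (∑ i, y i * ((∑ j, M i j * y j) + q i))) :=
    tendsto_finset_sum _ fun i _ => (hYi i).mul (hfi i)
  have : (fun n => ∑ i, Y n i * ((∑ j, A n i j * Y n j) + b n i)) = fun _ => (0:ℝ) :=
    funext fun n => (hmem n).2.2
  rw [this] at hsum
  exact tendsto_nhds_unique hsum tendsto_const_nhds


/-- Key construction: given a solution `x` of `(M,q)` and a solution `y ≠ x` of a nearby
problem `(M₂,q₂)`, build `(M',q')` close to `(M₂,q₂)` having both `x` and `y` as solutions. -/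
lemma key {M M₂ : Fin k → Fin k → ℝ} {q q₂ x y : Fin k → ℝ}
    (hx : x ∈ solS M q) (hy : y ∈ solS M₂ q₂) (j0 : Fin k) (hj0 : x j0 ≠ y j0) :
    ∃ (M' : Fin k → Fin k → ℝ) (q' : Fin k → ℝ), x ∈ solS M' q' ∧ y ∈ solS M' q' ∧
      (∀ i j, |M' i j - M₂ i j| ≤
        |((∑ l, M₂ i l * x l) + q₂ i) - ((∑ l, M i l * x l) + q i)| * |x j - y j|
          / (x j0 - y j0) ^ 2) ∧
      (∀ i, |q' i - q₂ i| ≤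
        |((∑ l, M₂ i l * x l) + q₂ i) - ((∑ l, M i l * x l) + q i)|
          * (∑ j, |x j - y j| * |y j|) / (x j0 - y j0) ^ 2) := by
  set v : Fin k → ℝ := fun j => x j - y j with hv
  set d : ℝ := ∑ j, v j ^ 2 with hd
  have hd0 : (x j0 - y j0) ^ 2 ≤ d :=
    Finset.single_le_sum (f := fun j => v j ^ 2) (fun j _ => sq_nonneg _) (Finset.mem_univ j0)
  have hsub : x j0 - y j0 ≠ 0 := sub_ne_zero.mpr hj0
  have hsq : 0 < (x j0 - y j0) ^ 2 := by
    have := abs_pos.mpr hsub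
    nlinarith [sq_abs (x j0 - y j0)]
  have hdpos : 0 < d := lt_of_lt_of_le hsq hd0
  set a : Fin k → ℝ := fun i => (∑ l, M₂ i l * x l) + q₂ i with ha
  set b : Fin k → ℝ := fun i => (∑ l, M i l * x l) + q i with hb
  set c : Fin k → ℝ := fun i => if x i = 0 then max (-(a i)) 0 else -(a i) with hc
  have hcabs : ∀ i, |c i| ≤ |a i - b i| := by
    intro i
    by_cases hxi : x i = 0
    · have hbi : 0 ≤ b i := hx.2.1 i
      have hci : c i = max (-(a i)) 0 := by simp only [hc]; rw [if_pos hxi]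
      rw [hci, abs_of_nonneg (le_max_right _ _), max_le_iff]
      refine ⟨?_, abs_nonneg _⟩
      calc -(a i) ≤ b i - a i := by linarith
        _ ≤ |b i - a i| := le_abs_self _
        _ = |a i - b i| := abs_sub_comm _ _
    · have hbi : b i = 0 := by
        have := terms_zero hx i
        exact (mul_eq_zero.mp this).resolve_left hxi
      have hci : c i = -(a i) := by simp only [hc]; rw [if_neg hxi]
      rw [hci, abs_neg, hbi, sub_zero]
  set M' : Fin k → Fin k → ℝ := fun i j => M₂ i j + c i * v j / d with hM'
  set q' : Fin k → ℝ := fun i => q₂ i - (c i / d) * ∑ j, v j * y j with hq'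
  have Sy : ∀ i, (∑ j, M' i j * y j) + q' i = (∑ j, M₂ i j * y j) + q₂ i := by
    intro i
    simp only [hM', hq']
    rw [show (∑ j, (M₂ i j + c i * v j / d) * y j)
        = (∑ j, M₂ i j * y j) + (c i / d) * ∑ j, v j * y j by
      rw [Finset.mul_sum, ← Finset.sum_add_distrib]
      congr 1; funext j; ring]
    ring
  have Sx : ∀ i, (∑ j, M' i j * x j) + q' i = a i + c i := by
    intro i
    simp only [hM', hq']
    rw [show (∑ j, (M₂ i j + c i * v j / d) * x j)
        = (∑ j, M₂ i j * x j) + (c i / d) * ∑ j, v j * x j by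
      rw [Finset.mul_sum, ← Finset.sum_add_distrib]
      congr 1; funext j; ring]
    have : (c i / d) * (∑ j, v j * x j) - (c i / d) * (∑ j, v j * y j) = c i := by
      rw [← mul_sub, ← Finset.sum_sub_distrib]
      rw [show (∑ j, (v j * x j - v j * y j)) = d by
        rw [hd]; congr 1; funext j; rw [hv]; ring]
      field_simp
    simp only [ha]
    linarith [this]
  have hAx : ∀ i, 0 ≤ a i + c i := by
    intro i
    by_cases hxi : x i = 0
    · have hci : c i = max (-(a i)) 0 := by simp only [hc]; rw [if_pos hxi]
      rw [hci]
      have : -(a i) ≤ max (-(a i)) 0 := le_max_left _ _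
      linarith
    · have hci : c i = -(a i) := by simp only [hc]; rw [if_neg hxi]
      rw [hci]; linarith
  have hAxc : ∀ i, x i * (a i + c i) = 0 := by
    intro i
    by_cases hxi : x i = 0
    · rw [hxi]; ring
    · have hci : c i = -(a i) := by simp only [hc]; rw [if_neg hxi]
      rw [hci]; ring
  refine ⟨M', q', ⟨hx.1, fun i => (Sx i) ▸ hAx i, ?_⟩,
    ⟨hy.1, fun i => (Sy i) ▸ hy.2.1 i, ?_⟩, ?_, ?_⟩
  · refine Finset.sum_eq_zero fun i _ => ?_
    rw [Sx i]; exact hAxc i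
  · calc (∑ i, y i * ((∑ j, M' i j * y j) + q' i))
        = ∑ i, y i * ((∑ j, M₂ i j * y j) + q₂ i) := by
          congr 1; funext i; rw [Sy i]
      _ = 0 := hy.2.2
  · intro i j
    have : M' i j - M₂ i j = c i * v j / d := by simp [hM']
    rw [this, abs_div, abs_mul, abs_of_pos hdpos]
    rw [div_le_div_iff₀ hdpos hsq]
    calc |c i| * |v j| * (x j0 - y j0) ^ 2 ≤ |a i - b i| * |v j| * d := by
          apply mul_le_mul (mul_le_mul_of_nonneg_right (hcabs i) (abs_nonneg _)) hd0
            (by positivity) (by positivity)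
      _ = |a i - b i| * |x j - y j| * d := by rw [hv]
  · intro i
    have : q' i - q₂ i = -((c i / d) * ∑ j, v j * y j) := by simp [hq']
    rw [this, abs_neg, abs_mul, abs_div, abs_of_pos hdpos]
    rw [div_mul_eq_mul_div, div_le_div_iff₀ hdpos hsq]
    have h1 : |∑ j, v j * y j| ≤ ∑ j, |x j - y j| * |y j| := by
      refine le_trans (Finset.abs_sum_le_sum_abs _ _) ?_
      refine le_of_eq (Finset.sum_congr rfl fun j _ => ?_)
      rw [abs_mul, hv]
    calc |c i| * |∑ j, v j * y j| * (x j0 - y j0) ^ 2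
        ≤ |a i - b i| * (∑ j, |x j - y j| * |y j|) * d := by
          apply mul_le_mul (mul_le_mul (hcabs i) h1 (abs_nonneg _) (abs_nonneg _)) hd0
            (by positivity) (by positivity)
      _ = _ := by ring

end Stmt14

section Main
open Stmt14

theorem stmt14_main (k : ℕ) (hk : 0 < k)
    (M : Fin k → Fin k → ℝ) (q : Fin k → ℝ)
    (hMpos : ∀ i j, 0 < M i j)
    (hstable : ∀ θs ∈ solS M q, ∃ ε > (0 : ℝ), ∃ δ > (0 : ℝ),
      ∀ (M' : Fin k → Fin k → ℝ) (q' : Fin k → ℝ), ‖M' - M‖ < δ → ‖q' - q‖ < δ →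
        ∃! θ : Fin k → ℝ, θ ∈ solS M' q' ∧ ‖θ - θs‖ < ε)
    (Mn : ℕ → Fin k → Fin k → ℝ) (qn : ℕ → Fin k → ℝ)
    (hMn : Filter.Tendsto Mn Filter.atTop (nhds M))
    (hqn : Filter.Tendsto qn Filter.atTop (nhds q)) :
    Filter.Tendsto (fun n => Metric.hausdorffDist (solS (Mn n) (qn n)) (solS M q))
      Filter.atTop (nhds 0) := by
  classical
  haveI : Nonempty (Fin k) := ⟨⟨0, hk⟩⟩
  -- the minimum entry of M
  set m : ℝ := Finset.univ.inf' Finset.univ_nonempty (fun p : Fin k × Fin k => M p.1 p.2)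
    with hmdef
  have hm : 0 < m := (Finset.lt_inf'_iff _).mpr fun p _ => hMpos p.1 p.2
  have hmle : ∀ i j, m ≤ M i j := fun i j => Finset.inf'_le _ (Finset.mem_univ (i, j))
  set R : ℝ := (‖q‖ + 1) / (m / 2) with hRdef
  -- eventual bounds
  have hMnear : ∀ᶠ n in atTop, ‖Mn n - M‖ < m / 2 := by
    have := Metric.tendsto_nhds.mp hMn (m / 2) (by positivity)
    filter_upwards [this] with n h
    rwa [dist_eq_norm] at h
  have hqnear : ∀ᶠ n in atTop, ‖qn n - q‖ < 1 := by
    have := Metric.tendsto_nhds.mp hqn 1 one_pos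
    filter_upwards [this] with n h
    rwa [dist_eq_norm] at h
  have hBnd : ∀ᶠ n in atTop, ∀ y ∈ solS (Mn n) (qn n), ‖y‖ ≤ R := by
    filter_upwards [hMnear, hqnear] with n h1 h2 y hy
    have entries : ∀ i j, m / 2 ≤ Mn n i j := by
      intro i j
      have := entry_abs_le (Mn n - M) i j
      simp only [Pi.sub_apply] at this
      have h3 := hmle i j
      have h4 := (abs_le.mp (this.trans h1.le)).1
      linarith
    have hnq : ‖qn n‖ ≤ ‖q‖ + 1 := by
      calc ‖qn n‖ = ‖(qn n - q) + q‖ := by ring_nf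
        _ ≤ ‖qn n - q‖ + ‖q‖ := norm_add_le _ _
        _ ≤ ‖q‖ + 1 := by linarith
    calc ‖y‖ ≤ ‖qn n‖ / (m / 2) := norm_bound (by positivity) entries hy
      _ ≤ R := by rw [hRdef]; gcongr
  -- Part A : upper semicontinuity
  have claimA : ∀ ε0 : ℝ, 0 < ε0 → ∀ᶠ n in atTop,
      ∀ y ∈ solS (Mn n) (qn n), ∃ x ∈ solS M q, dist y x ≤ ε0 := by
    intro ε0 hε0
    by_contra hcon
    have hfreq2 : ∃ᶠ n in atTop,
        (∃ y ∈ solS (Mn n) (qn n), ∀ x ∈ solS M q, ε0 < dist y x) ∧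
        (∀ y ∈ solS (Mn n) (qn n), ‖y‖ ≤ R) := by
      refine Filter.Frequently.and_eventually ?_ hBnd
      refine (Filter.not_eventually.mp hcon).mono ?_
      intro n h
      push_neg at h
      exact h
    obtain ⟨φ, hφ, hP⟩ := Filter.extraction_of_frequently_atTop hfreq2
    choose Y hYmem hYfar using fun n => (hP n).1
    have hYR : ∀ n, Y n ∈ Metric.closedBall (0 : Fin k → ℝ) R := fun n =>
      mem_closedBall_zero_iff.mpr ((hP n).2 _ (hYmem n))
    obtain ⟨yh, _, ψ, hψ, hconv⟩ :=
      (isCompact_closedBall (0 : Fin k → ℝ) R).tendsto_subseq hYR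
    have hyh : yh ∈ solS M q := by
      refine mem_of_tendsto (A := fun n => Mn (φ (ψ n))) (b := fun n => qn (φ (ψ n)))
        ?_ ?_ hconv (fun n => hYmem (ψ n))
      · exact hMn.comp (hφ.comp hψ).tendsto_atTop
      · exact hqn.comp (hφ.comp hψ).tendsto_atTop
    have hd : Tendsto (fun n => dist ((Y ∘ ψ) n) yh) atTop (nhds 0) :=
      tendsto_iff_dist_tendsto_zero.mp hconv
    obtain ⟨n, hn⟩ := (hd.eventually_lt_const hε0).exists
    have := hYfar (ψ n) yh hyh
    simp only [Function.comp_apply] at hn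
    linarith
  -- isolation of solutions
  have hiso : ∀ x ∈ solS M q, ∃ εx > (0:ℝ), ∀ y ∈ solS M q, dist x y < εx → y = x := by
    intro x hx
    obtain ⟨ε, hε, δ, hδ, hu⟩ := hstable x hx
    refine ⟨ε, hε, fun y hy hdist => ?_⟩
    have h0 := hu M q (by simpa using hδ) (by simpa using hδ)
    exact h0.unique ⟨hy, by rwa [← dist_eq_norm, dist_comm]⟩ ⟨hx, by simpa using hε⟩
  -- compactness and finiteness of solS M q
  have hclosed : IsClosed (solS M q) := by
    apply IsSeqClosed.isClosed
    intro Y y hYmem hconv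
    exact mem_of_tendsto tendsto_const_nhds tendsto_const_nhds hconv hYmem
  have hbdd : Bornology.IsBounded (solS M q) := by
    refine (Metric.isBounded_closedBall (x := (0 : Fin k → ℝ)) (r := ‖q‖ / m)).subset ?_
    intro y hy
    exact mem_closedBall_zero_iff.mpr (norm_bound hm hmle hy)
  have hcpt : IsCompact (solS M q) := isCompact_of_isClosed_isBounded hclosed hbdd
  choose! εx hεx hεuniq using hiso
  have hcover : solS M q ⊆ ⋃ x : solS M q, Metric.ball (x : Fin k → ℝ) (εx x) := by
    intro y hy
    exact Set.mem_iUnion.mpr ⟨⟨y, hy⟩, Metric.mem_ball_self (hεx y hy)⟩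
  obtain ⟨t, ht⟩ := hcpt.elim_finite_subcover
    (fun x : solS M q => Metric.ball (x : Fin k → ℝ) (εx x)) (fun _ => Metric.isOpen_ball)
    hcover
  have hfin : (solS M q).Finite := by
    refine Set.Finite.subset (Set.Finite.image (fun s : {θ // θ ∈ solS M q} => (s : Fin k → ℝ)) t.finite_toSet) ?_
    intro y hy
    obtain ⟨x, hxt, hyx⟩ := Set.mem_iUnion₂.mp (ht hy)
    have hyx' : dist (x : Fin k → ℝ) y < εx x := by
      rw [dist_comm]; exact Metric.mem_ball.mp hyx
    exact ⟨x, hxt, (hεuniq x x.2 y hy hyx').symm⟩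
  -- Part B pointwise
  have claimB1 : ∀ x ∈ solS M q, ∀ ε1 : ℝ, 0 < ε1 → ∀ᶠ n in atTop,
      ∃ y ∈ solS (Mn n) (qn n), dist x y ≤ ε1 := by
    intro x hx ε1 hε1
    obtain ⟨ε, hε, δ, hδ, hu⟩ := hstable x hx
    by_contra hcon
    have hMq : ∀ᶠ n in atTop, ‖Mn n - M‖ < δ ∧ ‖qn n - q‖ < δ := by
      have h1 := Metric.tendsto_nhds.mp hMn δ hδ
      have h2 := Metric.tendsto_nhds.mp hqn δ hδ
      filter_upwards [h1, h2] with n ha hb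
      rw [dist_eq_norm] at ha hb
      exact ⟨ha, hb⟩
    have hfreq2 : ∃ᶠ n in atTop,
        (∀ y ∈ solS (Mn n) (qn n), ε1 < dist x y) ∧
        (‖Mn n - M‖ < δ ∧ ‖qn n - q‖ < δ) := by
      refine Filter.Frequently.and_eventually ?_ hMq
      refine (Filter.not_eventually.mp hcon).mono ?_
      intro n h
      push_neg at h
      exact h
    obtain ⟨φ, hφ, hP⟩ := Filter.extraction_of_frequently_atTop hfreq2
    have hun : ∀ n, ∃! θ, θ ∈ solS (Mn (φ n)) (qn (φ n)) ∧ ‖θ - x‖ < ε := fun n =>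
      hu _ _ (hP n).2.1 (hP n).2.2
    choose Y hY using fun n => (hun n).exists
    have hfar : ∀ n, ε1 < dist x (Y n) := fun n => (hP n).1 _ (hY n).1
    have hYnorm : ∀ n, ‖Y n‖ ≤ ‖x‖ + ε := by
      intro n
      calc ‖Y n‖ = ‖(Y n - x) + x‖ := by ring_nf
        _ ≤ ‖Y n - x‖ + ‖x‖ := norm_add_le _ _
        _ ≤ ‖x‖ + ε := by have := (hY n).2; linarith
    have hj0ex : ∀ n, ∃ j, ε1 ≤ |x j - Y n j| := by
      intro n
      by_contra hno
      push_neg at hno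
      have hle : ‖x - Y n‖ ≤ ε1 := by
        refine (pi_norm_le_iff_of_nonneg hε1.le).mpr fun j => ?_
        rw [Pi.sub_apply, Real.norm_eq_abs]
        exact (hno j).le
      have := hfar n
      rw [dist_eq_norm] at this
      linarith
    choose j0 hj0 using hj0ex
    have hne0 : ∀ n, x (j0 n) ≠ Y n (j0 n) := by
      intro n h
      have := hj0 n
      rw [h, sub_self, abs_zero] at this
      linarith
    have hkey := fun n => key hx (hY n).1 (j0 n) (hne0 n)
    choose M' q' hxM' hyM' hMb hqb using hkey
    -- quantitative bounds
    set η : ℕ → ℝ := fun n => (k : ℝ) * ‖x‖ * ‖Mn (φ n) - M‖ + ‖qn (φ n) - q‖ with hηdef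
    have hab : ∀ n i,
        |((∑ l, Mn (φ n) i l * x l) + qn (φ n) i) - ((∑ l, M i l * x l) + q i)| ≤ η n := by
      intro n i
      have e1 : ∑ l, (Mn (φ n) i l - M i l) * x l
          = (∑ l, Mn (φ n) i l * x l) - (∑ l, M i l * x l) := by
        rw [← Finset.sum_sub_distrib]
        exact Finset.sum_congr rfl fun l _ => by ring
      have e2 : ((∑ l, Mn (φ n) i l * x l) + qn (φ n) i) - ((∑ l, M i l * x l) + q i)
          = (∑ l, (Mn (φ n) i l - M i l) * x l) + (qn (φ n) i - q i) := by
        rw [e1]; ring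
      rw [e2]
      calc |(∑ l, (Mn (φ n) i l - M i l) * x l) + (qn (φ n) i - q i)|
          ≤ |∑ l, (Mn (φ n) i l - M i l) * x l| + |qn (φ n) i - q i| := abs_add_le _ _
        _ ≤ (∑ l, |Mn (φ n) i l - M i l| * |x l|) + ‖qn (φ n) - q‖ := by
            refine add_le_add ?_ ?_
            · refine le_trans (Finset.abs_sum_le_sum_abs _ _) ?_
              exact le_of_eq (Finset.sum_congr rfl fun l _ => abs_mul _ _)
            · have := coord_abs_le (qn (φ n) - q) i
              simpa using this
        _ ≤ (∑ _l : Fin k, ‖Mn (φ n) - M‖ * ‖x‖) + ‖qn (φ n) - q‖ := by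
            refine add_le_add (Finset.sum_le_sum fun l _ => ?_) le_rfl
            refine mul_le_mul ?_ (coord_abs_le x l) (abs_nonneg _) (norm_nonneg _)
            have := entry_abs_le (Mn (φ n) - M) i l
            simpa using this
        _ = η n := by
            rw [Finset.sum_const, Finset.card_univ, Fintype.card_fin, nsmul_eq_mul, hηdef]
            ring
    have hdenom : ∀ n, ε1 ^ 2 ≤ (x (j0 n) - Y n (j0 n)) ^ 2 := by
      intro n
      nlinarith [hj0 n, abs_nonneg (x (j0 n) - Y n (j0 n)), sq_abs (x (j0 n) - Y n (j0 n))]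
    have hcoord : ∀ n j, |x j - Y n j| ≤ 2 * ‖x‖ + ε := by
      intro n j
      calc |x j - Y n j| ≤ |x j| + |Y n j| := abs_sub _ _
        _ ≤ ‖x‖ + ‖Y n‖ := add_le_add (coord_abs_le x j) (coord_abs_le (Y n) j)
        _ ≤ 2 * ‖x‖ + ε := by have := hYnorm n; linarith
    set C1 : ℝ := 2 * ‖x‖ + ε with hC1def
    have hC1 : 0 < C1 := by positivity
    set C2 : ℝ := (k : ℝ) * (C1 * (‖x‖ + ε)) with hC2def
    have hMb' : ∀ n, ‖M' n - Mn (φ n)‖ ≤ η n * C1 / ε1 ^ 2 := by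
      intro n
      have hnn : 0 ≤ η n * C1 / ε1 ^ 2 := by
        have : 0 ≤ η n := le_trans (abs_nonneg _) (hab n ⟨0, hk⟩)
        positivity
      refine (pi_norm_le_iff_of_nonneg hnn).mpr fun i => ?_
      refine (pi_norm_le_iff_of_nonneg hnn).mpr fun j => ?_
      have hb1 := hMb n i j
      simp only [Pi.sub_apply, Real.norm_eq_abs]
      refine le_trans hb1 ?_
      refine div_le_div₀ (by positivity) ?_ (by positivity) (hdenom n)
      exact mul_le_mul (hab n i) (hcoord n j) (abs_nonneg _)
        (le_trans (abs_nonneg _) (hab n ⟨0, hk⟩))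
    have hqb' : ∀ n, ‖q' n - qn (φ n)‖ ≤ η n * C2 / ε1 ^ 2 := by
      intro n
      have hη0 : 0 ≤ η n := le_trans (abs_nonneg _) (hab n ⟨0, hk⟩)
      have hnn : 0 ≤ η n * C2 / ε1 ^ 2 := by positivity
      refine (pi_norm_le_iff_of_nonneg hnn).mpr fun i => ?_
      have hb1 := hqb n i
      simp only [Pi.sub_apply, Real.norm_eq_abs]
      refine le_trans hb1 ?_
      refine div_le_div₀ (by positivity) ?_ (by positivity) (hdenom n)
      refine mul_le_mul (hab n i) ?_ ?_ hη0
      · calc (∑ j, |x j - Y n j| * |Y n j|)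
            ≤ ∑ _j : Fin k, C1 * (‖x‖ + ε) := by
              refine Finset.sum_le_sum fun j _ => ?_
              refine mul_le_mul (hcoord n j) ?_ (abs_nonneg _) hC1.le
              exact le_trans (coord_abs_le (Y n) j) (hYnorm n)
          _ = C2 := by
              rw [Finset.sum_const, Finset.card_univ, Fintype.card_fin, nsmul_eq_mul, hC2def]
      · exact Finset.sum_nonneg fun j _ => mul_nonneg (abs_nonneg _) (abs_nonneg _)
    -- limits
    have hM0 : Tendsto (fun n => ‖Mn (φ n) - M‖) atTop (nhds 0) := by
      have h1 : Tendsto (fun n => Mn (φ n) - M) atTop (nhds 0) := by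
        have := (hMn.comp hφ.tendsto_atTop).sub (tendsto_const_nhds (x := M))
        simpa using this
      simpa using h1.norm
    have hq0 : Tendsto (fun n => ‖qn (φ n) - q‖) atTop (nhds 0) := by
      have h1 : Tendsto (fun n => qn (φ n) - q) atTop (nhds 0) := by
        have := (hqn.comp hφ.tendsto_atTop).sub (tendsto_const_nhds (x := q))
        simpa using this
      simpa using h1.norm
    have hη : Tendsto η atTop (nhds 0) := by
      have := (hM0.const_mul ((k : ℝ) * ‖x‖)).add hq0
      simpa [hηdef] using this
    have hev : ∀ᶠ n in atTop, η n * C1 / ε1 ^ 2 + ‖Mn (φ n) - M‖ < δ ∧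
        η n * C2 / ε1 ^ 2 + ‖qn (φ n) - q‖ < δ := by
      have t1 : Tendsto (fun n => η n * C1 / ε1 ^ 2 + ‖Mn (φ n) - M‖) atTop (nhds 0) := by
        have := ((hη.mul_const C1).div_const (ε1 ^ 2)).add hM0
        simpa using this
      have t2 : Tendsto (fun n => η n * C2 / ε1 ^ 2 + ‖qn (φ n) - q‖) atTop (nhds 0) := by
        have := ((hη.mul_const C2).div_const (ε1 ^ 2)).add hq0
        simpa using this
      exact (t1.eventually_lt_const hδ).and (t2.eventually_lt_const hδ)
    obtain ⟨n, hn1, hn2⟩ := hev.exists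
    have hMδ : ‖M' n - M‖ < δ := by
      calc ‖M' n - M‖ = ‖(M' n - Mn (φ n)) + (Mn (φ n) - M)‖ := by ring_nf
        _ ≤ ‖M' n - Mn (φ n)‖ + ‖Mn (φ n) - M‖ := norm_add_le _ _
        _ < δ := by have := hMb' n; linarith
    have hqδ : ‖q' n - q‖ < δ := by
      calc ‖q' n - q‖ = ‖(q' n - qn (φ n)) + (qn (φ n) - q)‖ := by ring_nf
        _ ≤ ‖q' n - qn (φ n)‖ + ‖qn (φ n) - q‖ := norm_add_le _ _
        _ < δ := by have := hqb' n; linarith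
    have huniq := hu (M' n) (q' n) hMδ hqδ
    have hxy : x = Y n := huniq.unique ⟨hxM' n, by simpa using hε⟩ ⟨hyM' n, (hY n).2⟩
    have := hfar n
    rw [← hxy, dist_self] at this
    linarith
  -- Part B uniform
  have claimB : ∀ ε0 : ℝ, 0 < ε0 → ∀ᶠ n in atTop,
      ∀ x ∈ solS M q, ∃ y ∈ solS (Mn n) (qn n), dist x y ≤ ε0 := by
    intro ε0 hε0
    exact (Set.Finite.eventually_all hfin).mpr fun x hx => claimB1 x hx ε0 hε0
  -- conclusion
  rw [Metric.tendsto_nhds]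
  intro ε hε
  filter_upwards [claimA (ε / 2) (by positivity), claimB (ε / 2) (by positivity)] with n hA hB
  have hh : Metric.hausdorffDist (solS (Mn n) (qn n)) (solS M q) ≤ ε / 2 :=
    Metric.hausdorffDist_le_of_mem_dist (by positivity) hA hB
  have h0 : (0:ℝ) ≤ Metric.hausdorffDist (solS (Mn n) (qn n)) (solS M q) :=
    Metric.hausdorffDist_nonneg
  rw [dist_zero_right, Real.norm_eq_abs, abs_of_nonneg h0]
  linarith

end Main

/-- Hausdorff continuity of the LCP solution set under strong stability: if all entries of `M`
are positive and every solution of `LCP(M, q)` is strongly stable, then for `Mₙ → M`,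
`qₙ → q` the Hausdorff distance between `SOL(Mₙ, qₙ)` and `SOL(M, q)` tends to zero. -/
theorem stmt14 (k : ℕ) (hk : 0 < k)
    (M : Fin k → Fin k → ℝ) (q : Fin k → ℝ)
    (hMpos : ∀ i j, 0 < M i j)
    (SOL : (Fin k → Fin k → ℝ) → (Fin k → ℝ) → Set (Fin k → ℝ))
    (hSOL : ∀ M' q', SOL M' q' =
      {θ : Fin k → ℝ | (∀ i, 0 ≤ θ i) ∧ (∀ i, 0 ≤ (∑ j, M' i j * θ j) + q' i) ∧
        ∑ i, θ i * ((∑ j, M' i j * θ j) + q' i) = 0})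
    (hstable : ∀ θs ∈ SOL M q, ∃ ε > (0 : ℝ), ∃ δ > (0 : ℝ),
      ∀ (M' : Fin k → Fin k → ℝ) (q' : Fin k → ℝ), ‖M' - M‖ < δ → ‖q' - q‖ < δ →
        ∃! θ : Fin k → ℝ, θ ∈ SOL M' q' ∧ ‖θ - θs‖ < ε)
    (Mn : ℕ → Fin k → Fin k → ℝ) (qn : ℕ → Fin k → ℝ)
    (hMn : Filter.Tendsto Mn Filter.atTop (nhds M))
    (hqn : Filter.Tendsto qn Filter.atTop (nhds q)) :
    Filter.Tendsto (fun n => Metric.hausdorffDist (SOL (Mn n) (qn n)) (SOL M q))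
      Filter.atTop (nhds 0) := by
  have hS : ∀ M' q', SOL M' q' = Stmt14.solS M' q' := fun M' q' => (hSOL M' q').trans rfl
  simp only [hS] at hstable ⊢
  exact stmt14_main k hk M q hMpos hstable Mn qn hMn hqn
end

section
/- Let k ≥ 1 and let M ∈ ℝ^{k×k} have all entries strictly positive, q ∈ ℝ^k. Define SOL(M, q) = {θ ∈ ℝ^k : θ ≥ 0, Mθ + q ≥ 0, θ^T (Mθ + q) = 0}, and call θ* ∈ SOL(M, q) strongly stable if there exist ε > 0 and δ > 0 such that for every (M', q') with ‖M' − M‖ < δ and ‖q' − q‖ < δ, the set SOL(M', q') ∩ {θ : ‖θ − θ*‖ < ε} contains exactly one point. Suppose every element of SOL(M, q) is strongly stable, and let θ* ∈ SOL(M, q) satisfy strict complementarity, i.e., θ*_i + (Mθ* + q)_i > 0 for every i. Then for any sequences M_n → M and q_n → q there exists N such that for every n ≥ N there is θ_n ∈ SOL(M_n, q_n) with {i : (θ_n)_i > 0} = {i : θ*_i > 0}. -/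
/-!
Let `P` be the support of the strictly complementary solution `θs`. On `P` the complementarity
conditions force `M_PP θs_P = -q_P`, and strict complementarity makes all remaining sign
conditions strict, hence stable under small perturbations. If `M_PP` were singular, a kernel
vector `v` would give solutions `θs + t v` of `LCP(M, q)` for all small `t`, contradicting
strong stability. So `M_PP` is invertible, and extending `(Mₙ)_PP⁻¹ (-(qₙ)_P)` by zero gives,
for large `n`, a solution of `LCP(Mₙ, qₙ)` close to `θs` with the same support.
-/

open Filter Matrix Topology

section ExtendByZero

variable {ι m R : Type*} {p : ι → Prop}

theorem mulVec_extend_subtype_val [Fintype ι] [NonUnitalNonAssocSemiring R] [DecidablePred p]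
    (M : Matrix m ι R) (v : {i // p i} → R) :
    M *ᵥ Function.extend Subtype.val v 0 = M.submatrix id Subtype.val *ᵥ v := by
  ext i
  simp only [mulVec, dotProduct, submatrix_apply, id]
  rw [← Fintype.sum_subtype_add_sum_subtype p, Fintype.sum_eq_zero (fun j : {j // ¬p j} => _)
    fun j => by rw [Function.extend_val_apply' j.2, Pi.zero_apply, mul_zero], add_zero]
  simp only [Function.extend_val_apply (Subtype.prop _)]

theorem extend_subtype_val_comp_eq_self [Zero R] {f : ι → R} (hf : ∀ i, ¬p i → f i = 0) :
    Function.extend (Subtype.val : {i // p i} → ι) (f ∘ Subtype.val) 0 = f := by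
  ext i
  by_cases hi : p i
  · exact Function.extend_val_apply hi
  · rw [Function.extend_val_apply' hi, hf i hi, Pi.zero_apply]

theorem continuous_extend_subtype_val [TopologicalSpace R] [Zero R] :
    Continuous fun v : {i // p i} → R => Function.extend Subtype.val v 0 := by
  refine continuous_pi fun i => ?_
  by_cases h : p i
  · simp only [Function.extend_val_apply h]
    exact continuous_apply _
  · simp only [Function.extend_val_apply' h]
    exact continuous_const

theorem Filter.Tendsto.matrix_mulVec [Fintype ι] [TopologicalSpace R]
    [NonUnitalNonAssocSemiring R] [ContinuousAdd R] [ContinuousMul R] {α : Type*} {l : Filter α}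
    {A : α → Matrix m ι R} {v : α → ι → R} {A₀ : Matrix m ι R} {v₀ : ι → R}
    (hA : Tendsto A l (𝓝 A₀)) (hv : Tendsto v l (𝓝 v₀)) :
    Tendsto (fun a => A a *ᵥ v a) l (𝓝 (A₀ *ᵥ v₀)) :=
  ((continuous_fst.matrix_mulVec continuous_snd).tendsto (A₀, v₀)).comp (hA.prodMk_nhds hv)

end ExtendByZero

section LCP

variable {ι : Type*} [Fintype ι]

def IsLCPSolution (M : Matrix ι ι ℝ) (q θ : ι → ℝ) : Prop :=
  0 ≤ θ ∧ 0 ≤ M *ᵥ θ + q ∧ θ ⬝ᵥ (M *ᵥ θ + q) = 0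

theorem isLCPSolution_iff_forall {M : Matrix ι ι ℝ} {q θ : ι → ℝ} :
    IsLCPSolution M q θ ↔
      ∀ i, 0 ≤ θ i ∧ 0 ≤ (M *ᵥ θ + q) i ∧ θ i * (M *ᵥ θ + q) i = 0 := by
  simp only [IsLCPSolution, Pi.le_def, Pi.zero_apply, forall_and, dotProduct]
  refine and_congr_right fun hθ => and_congr_right fun hw => ?_
  rw [Finset.sum_eq_zero_iff_of_nonneg fun i _ => mul_nonneg (hθ i) (hw i)]
  simp only [Finset.mem_univ, true_implies]

variable {M : Matrix ι ι ℝ} {q θ : ι → ℝ}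

theorem IsLCPSolution.eq_zero_of_not_pos (hθ : IsLCPSolution M q θ) {i : ι} (hi : ¬0 < θ i) :
    θ i = 0 :=
  le_antisymm (not_lt.1 hi) (isLCPSolution_iff_forall.1 hθ i).1

theorem IsLCPSolution.apply_eq_zero_of_pos (hθ : IsLCPSolution M q θ) {i : ι} (hi : 0 < θ i) :
    (M *ᵥ θ + q) i = 0 :=
  (mul_eq_zero.1 (isLCPSolution_iff_forall.1 hθ i).2.2).resolve_left hi.ne'

variable {α : Type*} {l : Filter α} {θs : ι → ℝ}

theorem IsLCPSolution.eventually_of_tendsto (hθs : IsLCPSolution M q θs)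
    (hstrict : ∀ i, 0 < θs i + (M *ᵥ θs + q) i)
    {M' : α → Matrix ι ι ℝ} {q' θ' : α → ι → ℝ}
    (hM : Tendsto M' l (𝓝 M)) (hq : Tendsto q' l (𝓝 q)) (hθ : Tendsto θ' l (𝓝 θs))
    (hzero : ∀ᶠ a in l, ∀ i, ¬0 < θs i → θ' a i = 0)
    (hcompl : ∀ᶠ a in l, ∀ i, 0 < θs i → (M' a *ᵥ θ' a + q' a) i = 0) :
    ∀ᶠ a in l, IsLCPSolution (M' a) (q' a) (θ' a) ∧ ∀ i, 0 < θ' a i ↔ 0 < θs i := by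
  have hw : Tendsto (fun a => M' a *ᵥ θ' a + q' a) l (𝓝 (M *ᵥ θs + q)) :=
    (hM.matrix_mulVec hθ).add hq
  have hstrict' : ∀ᶠ a in l, ∀ i,
      (0 < θs i → 0 < θ' a i) ∧ (¬0 < θs i → 0 < (M' a *ᵥ θ' a + q' a) i) := by
    refine eventually_all.2 fun i => ?_
    by_cases hi : 0 < θs i
    · filter_upwards [(tendsto_pi_nhds.1 hθ i).eventually_const_lt hi] with a ha
      exact ⟨fun _ => ha, absurd hi⟩
    · have hwi : 0 < (M *ᵥ θs + q) i := by simpa [hθs.eq_zero_of_not_pos hi] using hstrict i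
      filter_upwards [(tendsto_pi_nhds.1 hw i).eventually_const_lt hwi] with a ha
      exact ⟨fun h => absurd h hi, fun _ => ha⟩
  filter_upwards [hzero, hcompl, hstrict'] with a hzero hcompl hstrict'
  refine ⟨isLCPSolution_iff_forall.2 fun i => ?_, fun i => ?_⟩
  all_goals by_cases hi : 0 < θs i
  · exact ⟨((hstrict' i).1 hi).le, (hcompl i hi).ge, by rw [hcompl i hi, mul_zero]⟩
  · exact ⟨(hzero i hi).ge, ((hstrict' i).2 hi).le, by rw [hzero i hi, zero_mul]⟩
  · exact iff_of_true ((hstrict' i).1 hi) hi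
  · exact iff_of_false (hzero i hi).not_gt hi

variable [DecidableEq ι]

theorem IsLCPSolution.det_submatrix_support_ne_zero (hθs : IsLCPSolution M q θs)
    (hstrict : ∀ i, 0 < θs i + (M *ᵥ θs + q) i)
    (hiso : ∀ᶠ θ in 𝓝 θs, IsLCPSolution M q θ → θ = θs) :
    (M.submatrix (Subtype.val : {i // 0 < θs i} → ι) Subtype.val).det ≠ 0 := by
  intro hdet
  obtain ⟨v, hv, hMv⟩ := exists_mulVec_eq_zero_iff.2 hdet
  set u : ι → ℝ := Function.extend Subtype.val v 0
  have hline : Tendsto (fun t : ℝ => θs + t • u) (𝓝[≠] 0) (𝓝 θs) :=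
    ((continuous_const.add (continuous_id.smul continuous_const)).tendsto' 0 θs
      (by simp)).mono_left nhdsWithin_le_nhds
  have hsol := hθs.eventually_of_tendsto hstrict tendsto_const_nhds tendsto_const_nhds hline
    (.of_forall fun t i hi => by simp [u, hθs.eq_zero_of_not_pos hi])
    (.of_forall fun t i hi => by
      have hMu : (M *ᵥ u) i = 0 := by
        rw [mulVec_extend_subtype_val]
        exact congrFun hMv ⟨i, hi⟩
      have hwi := hθs.apply_eq_zero_of_pos hi
      simp only [mulVec_add, mulVec_smul, Pi.add_apply, Pi.smul_apply, smul_eq_mul] at hwi ⊢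
      rw [hMu, mul_zero, add_zero, hwi])
  obtain ⟨t, ⟨hts, -⟩, htθ, ht⟩ :=
    (hsol.and ((hline.eventually hiso).and self_mem_nhdsWithin)).exists
  have hu : u = 0 := (by simpa using htθ hts : t = 0 ∨ u = 0).resolve_left ht
  exact hv (funext fun j => by simpa [u, Function.extend_val_apply j.2] using congrFun hu j)

theorem IsLCPSolution.eventually_exists_support_eq (hθs : IsLCPSolution M q θs)
    (hstrict : ∀ i, 0 < θs i + (M *ᵥ θs + q) i)
    (hdet : (M.submatrix (Subtype.val : {i // 0 < θs i} → ι) Subtype.val).det ≠ 0)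
    {M' : α → Matrix ι ι ℝ} {q' : α → ι → ℝ} (hM : Tendsto M' l (𝓝 M))
    (hq : Tendsto q' l (𝓝 q)) :
    ∀ᶠ a in l, ∃ θ, IsLCPSolution (M' a) (q' a) θ ∧ ∀ i, 0 < θ i ↔ 0 < θs i := by
  set P := {i // 0 < θs i}
  set A₀ : Matrix P P ℝ := M.submatrix Subtype.val Subtype.val
  set A : α → Matrix P P ℝ := fun a => (M' a).submatrix Subtype.val Subtype.val
  set x : α → P → ℝ := fun a => (A a)⁻¹ *ᵥ -(q' a ∘ Subtype.val)
  have hA : Tendsto A l (𝓝 A₀) :=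
    ((continuous_id.matrix_submatrix _ _).tendsto M).comp hM
  have hext : Function.extend Subtype.val (θs ∘ (Subtype.val : P → ι)) 0 = θs :=
    extend_subtype_val_comp_eq_self fun _ => hθs.eq_zero_of_not_pos
  have hθsP : A₀ *ᵥ (θs ∘ Subtype.val) = -(q ∘ Subtype.val) := by
    have hMθs : M.submatrix id Subtype.val *ᵥ (θs ∘ (Subtype.val : P → ι)) = M *ᵥ θs := by
      rw [← mulVec_extend_subtype_val, hext]
    ext j
    have := hθs.apply_eq_zero_of_pos j.2
    rw [Pi.add_apply, ← hMθs] at this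
    exact eq_neg_of_add_eq_zero_left this
  have hx : Tendsto x l (𝓝 (θs ∘ Subtype.val)) := by
    have hinv : Tendsto (fun a => (A a)⁻¹) l (𝓝 A₀⁻¹) :=
      (continuousAt_matrix_inv A₀ (by
        rw [Ring.inverse_eq_inv']; exact continuousAt_inv₀ hdet)).tendsto.comp hA
    have hqP : Tendsto (fun a => -(q' a ∘ Subtype.val)) l (𝓝 (-(q ∘ (Subtype.val : P → ι)))) :=
      (tendsto_pi_nhds.2 fun j : P => tendsto_pi_nhds.1 hq j.1).neg
    convert hinv.matrix_mulVec hqP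
    rw [← hθsP, mulVec_mulVec, nonsing_inv_mul A₀ (isUnit_iff_ne_zero.2 hdet), one_mulVec]
  have hθ : Tendsto (fun a => Function.extend Subtype.val (x a) 0) l (𝓝 θs) := by
    have := (continuous_extend_subtype_val.tendsto _).comp hx
    rwa [hext] at this
  have hcompl : ∀ᶠ a in l, ∀ i, 0 < θs i →
      (M' a *ᵥ Function.extend Subtype.val (x a) 0 + q' a) i = 0 := by
    filter_upwards [((continuous_id.matrix_det.tendsto _).comp hA).eventually_ne hdet]
      with a ha i hi
    have : A a *ᵥ x a = -(q' a ∘ Subtype.val) := by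
      rw [mulVec_mulVec, mul_nonsing_inv (A a) (isUnit_iff_ne_zero.2 ha), one_mulVec]
    simp only [Pi.add_apply, mulVec_extend_subtype_val]
    rw [show ((M' a).submatrix id Subtype.val *ᵥ x a) i = -q' a i from congrFun this ⟨i, hi⟩,
      neg_add_cancel]
  filter_upwards [hθs.eventually_of_tendsto hstrict hM hq hθ
    (.of_forall fun a i hi => Function.extend_val_apply' hi) hcompl] with a ha
  exact ⟨_, ha⟩

end LCP

theorem stmt15_general (k : ℕ)
    (M : Fin k → Fin k → ℝ) (q : Fin k → ℝ)
    (SOL : (Fin k → Fin k → ℝ) → (Fin k → ℝ) → Set (Fin k → ℝ))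
    (hSOL : ∀ M' q', SOL M' q' =
      {θ : Fin k → ℝ | (∀ i, 0 ≤ θ i) ∧ (∀ i, 0 ≤ (∑ j, M' i j * θ j) + q' i) ∧
        ∑ i, θ i * ((∑ j, M' i j * θ j) + q' i) = 0})
    (hstable : ∀ θs ∈ SOL M q, ∃ ε > (0 : ℝ), ∃ δ > (0 : ℝ),
      ∀ (M' : Fin k → Fin k → ℝ) (q' : Fin k → ℝ), ‖M' - M‖ < δ → ‖q' - q‖ < δ →
        ∃! θ : Fin k → ℝ, θ ∈ SOL M' q' ∧ ‖θ - θs‖ < ε)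
    (θs : Fin k → ℝ) (hθs : θs ∈ SOL M q)
    (hstrict : ∀ i, 0 < θs i + ((∑ j, M i j * θs j) + q i))
    (Mn : ℕ → Fin k → Fin k → ℝ) (qn : ℕ → Fin k → ℝ)
    (hMn : Filter.Tendsto Mn Filter.atTop (nhds M))
    (hqn : Filter.Tendsto qn Filter.atTop (nhds q)) :
    ∃ N : ℕ, ∀ n ≥ N, ∃ θn ∈ SOL (Mn n) (qn n),
      {i : Fin k | 0 < θn i} = {i : Fin k | 0 < θs i} := by
  obtain ⟨ε, hε, δ, hδ, huniq⟩ := hstable θs hθs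
  obtain rfl : SOL = fun M' q' => {θ | IsLCPSolution M' q' θ} := funext₂ hSOL
  have hiso : ∀ᶠ θ in 𝓝 θs, IsLCPSolution M q θ → θ = θs := by
    filter_upwards [Metric.ball_mem_nhds θs hε] with θ hθ hsol
    exact (huniq M q (by simpa using hδ) (by simpa using hδ)).unique
      ⟨hsol, by rwa [← dist_eq_norm]⟩ ⟨hθs, by simpa using hε⟩
  have hdet := hθs.det_submatrix_support_ne_zero hstrict hiso
  obtain ⟨N, hN⟩ := eventually_atTop.1 (hθs.eventually_exists_support_eq hstrict hdet hMn hqn)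
  refine ⟨N, fun n hn => ?_⟩
  obtain ⟨θ, hsol, hsupp⟩ := hN n hn
  exact ⟨θ, hsol, Set.ext hsupp⟩

/-- Persistence of the support of a strictly complementary, strongly stable LCP solution: if
all entries of `M` are positive, every solution of `LCP(M, q)` is strongly stable, and
`θ* ∈ SOL(M, q)` satisfies strict complementarity, then for `Mₙ → M`, `qₙ → q` and all large
`n` there is `θₙ ∈ SOL(Mₙ, qₙ)` with the same support as `θ*`. -/
theorem stmt15 (k : ℕ) (hk : 0 < k)
    (M : Fin k → Fin k → ℝ) (q : Fin k → ℝ)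
    (hMpos : ∀ i j, 0 < M i j)
    (SOL : (Fin k → Fin k → ℝ) → (Fin k → ℝ) → Set (Fin k → ℝ))
    (hSOL : ∀ M' q', SOL M' q' =
      {θ : Fin k → ℝ | (∀ i, 0 ≤ θ i) ∧ (∀ i, 0 ≤ (∑ j, M' i j * θ j) + q' i) ∧
        ∑ i, θ i * ((∑ j, M' i j * θ j) + q' i) = 0})
    (hstable : ∀ θs ∈ SOL M q, ∃ ε > (0 : ℝ), ∃ δ > (0 : ℝ),
      ∀ (M' : Fin k → Fin k → ℝ) (q' : Fin k → ℝ), ‖M' - M‖ < δ → ‖q' - q‖ < δ →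
        ∃! θ : Fin k → ℝ, θ ∈ SOL M' q' ∧ ‖θ - θs‖ < ε)
    (θs : Fin k → ℝ) (hθs : θs ∈ SOL M q)
    (hstrict : ∀ i, 0 < θs i + ((∑ j, M i j * θs j) + q i))
    (Mn : ℕ → Fin k → Fin k → ℝ) (qn : ℕ → Fin k → ℝ)
    (hMn : Filter.Tendsto Mn Filter.atTop (nhds M))
    (hqn : Filter.Tendsto qn Filter.atTop (nhds q)) :
    ∃ N : ℕ, ∀ n ≥ N, ∃ θn ∈ SOL (Mn n) (qn n),
      {i : Fin k | 0 < θn i} = {i : Fin k | 0 < θs i} :=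
  stmt15_general k M q SOL hSOL hstable θs hθs hstrict Mn qn hMn hqn
end

section
/- Let a, b, c, d be nonnegative real numbers satisfying the strict complementarity conditions (a > 0 ↔ c = 0) and (b > 0 ↔ d = 0). Then a·b + c·d = 0 if and only if exactly one of a and b is positive (i.e., (a > 0) XOR (b > 0)). -/
/-- The step-equilibration switching indicator: for nonnegative reals with the strict
complementarity properties `(a > 0 ↔ c = 0)` and `(b > 0 ↔ d = 0)`, the indicator
`a·b + c·d` vanishes exactly when exactly one of `a` and `b` is positive. -/
theorem stmt16 (a b c d : ℝ) (ha : 0 ≤ a) (hb : 0 ≤ b) (hc : 0 ≤ c) (hd : 0 ≤ d)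
    (hac : 0 < a ↔ c = 0) (hbd : 0 < b ↔ d = 0) :
    a * b + c * d = 0 ↔ Xor' (0 < a) (0 < b) := by
  rcases ha.lt_or_eq with hA | hA <;> rcases hb.lt_or_eq with hB | hB
  · have hc0 := hac.mp hA
    have hd0 := hbd.mp hB
    simp [hc0, Xor', hA, hB, mul_pos hA hB, ne_of_gt (mul_pos hA hB)]
  · have hc0 := hac.mp hA
    have hd0 : 0 < d := lt_of_le_of_ne hd (fun h => (hB ▸ hbd.mpr h.symm).false)
    simp [hc0, ← hB, Xor', hA, not_lt.mpr hB.le]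
  · have hd0 := hbd.mp hB
    have hc0 : 0 < c := lt_of_le_of_ne hc (fun h => (hA ▸ hac.mpr h.symm).false)
    simp [hd0, ← hA, Xor', hB, not_lt.mpr hA.le]
  · have hc0 : 0 < c := lt_of_le_of_ne hc (fun h => (hA ▸ hac.mpr h.symm).false)
    have hd0 : 0 < d := lt_of_le_of_ne hd (fun h => (hB ▸ hbd.mpr h.symm).false)
    simp [← hA, ← hB, Xor', ne_of_gt (mul_pos hc0 hd0)]
end
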